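/- There exists a set R ⊆ ℕ which is both canonically immune and hyperimmune. -/

import Mathlib

/-- The `e`-th computably enumerable set. -/
def WSet (e : ℕ) : Set ℕ := {n | ((Denumerable.ofNat Nat.Partrec.Code e).eval n).Dom}

/-- A canonical numbering: a computable surjection onto the finite subsets of `ℕ`. -/
def CanonicalNumbering (D : ℕ → Finset ℕ) : Prop := Computable D ∧ Function.Surjective D

/-- `R` is canonically immune with modulus of immunity `h`. -/
def CanonImmuneMod (R : Set ℕ) (h : ℕ → ℕ) : Prop :=
  R.Infinite ∧ ∀ D : ℕ → Finset ℕ, CanonicalNumbering D →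
    ∀ᶠ i in Filter.atTop, ↑(D i) ⊆ R → (D i).card ≤ h i

/-- `R` is canonically immune. -/
def CanonicallyImmune (R : Set ℕ) : Prop :=
  ∃ h : ℕ → ℕ, Computable h ∧ CanonImmuneMod R h

/-- `R` is Δ⁰₂ (limit computable). -/
def Delta02 (R : Set ℕ) : Prop :=
  ∃ f : ℕ → ℕ → Bool, Computable₂ f ∧
    ∀ n, ∀ᶠ s in Filter.atTop, (f s n = true ↔ n ∈ R)

/-- Partial functions recursive in an oracle `O : ℕ → ℕ`. -/
inductive RecursiveIn' (O : ℕ → ℕ) : (ℕ →. ℕ) → Prop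
  | zero : RecursiveIn' O fun _ => 0
  | succ : RecursiveIn' O fun n => Part.some (n + 1)
  | left : RecursiveIn' O fun n => Part.some (Nat.unpair n).1
  | right : RecursiveIn' O fun n => Part.some (Nat.unpair n).2
  | oracle : RecursiveIn' O fun n => Part.some (O n)
  | pair {f g} : RecursiveIn' O f → RecursiveIn' O g →
      RecursiveIn' O fun n => Nat.pair <$> f n <*> g n
  | comp {f g} : RecursiveIn' O f → RecursiveIn' O g →
      RecursiveIn' O fun n => g n >>= f
  | prec {f g} : RecursiveIn' O f → RecursiveIn' O g →
      RecursiveIn' O (Nat.unpaired fun a n =>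
        n.rec (f a) fun y IH => do let i ← IH; g (Nat.pair a (Nat.pair y i)))
  | rfind {f} : RecursiveIn' O f →
      RecursiveIn' O fun a => Nat.rfind fun n => (fun m => m = 0) <$> f (Nat.pair a n)

open Classical in
/-- Characteristic function of a set of naturals. -/
noncomputable def chi (A : Set ℕ) : ℕ → ℕ := fun n => if n ∈ A then 1 else 0

/-- `A` is Turing reducible to the oracle `O`. -/
def TuringReducibleTo (A : Set ℕ) (O : ℕ → ℕ) : Prop :=
  RecursiveIn' O fun n => Part.some (chi A n)

/-- `A` is Turing reducible to the set `B`. -/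
def TuringReducible' (A B : Set ℕ) : Prop := TuringReducibleTo A (chi B)

/-- The oracle given by a real `G ∈ 2^ω`. -/
def oracleOf (G : ℕ → Bool) : ℕ → ℕ := fun n => cond (G n) 1 0

/-- `S` is computably enumerable relative to the real `G`. -/
def CEIn (G : ℕ → Bool) (S : Set ℕ) : Prop :=
  ∃ f : ℕ →. ℕ, RecursiveIn' (oracleOf G) f ∧ S = {n | (f n).Dom}

/-- The length-`n` initial segment of a real. -/
def initSeg (G : ℕ → Bool) (n : ℕ) : List Bool := List.ofFn fun i : Fin n => G i

/-- A Σ⁰₂ set of binary strings. -/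
def Sigma02Strings (X : Set (List Bool)) : Prop :=
  ∃ p : List Bool → ℕ → ℕ → Bool,
    (Computable fun x : List Bool × ℕ × ℕ => p x.1 x.2.1 x.2.2) ∧
    X = {σ | ∃ m, ∀ k, p σ m k = true}

/-- A (Cohen) 2-generic real. -/
def TwoGeneric (G : ℕ → Bool) : Prop :=
  ∀ X : Set (List Bool), Sigma02Strings X →
    (∃ n, initSeg G n ∈ X) ∨ (∃ n, ∀ τ, initSeg G n <+: τ → τ ∉ X)

/-- A computably enumerable set of binary strings. -/
def CEStrings (X : Set (List Bool)) : Prop :=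
  ∃ p : List Bool → ℕ → Bool, Computable₂ p ∧ X = {σ | ∃ s, p σ s = true}

/-- A dense set of binary strings. -/
def DenseStrings (X : Set (List Bool)) : Prop := ∀ σ, ∃ τ, σ <+: τ ∧ τ ∈ X

/-- A weakly 1-generic real. -/
def Weakly1Generic (G : ℕ → Bool) : Prop :=
  ∀ X : Set (List Bool), CEStrings X → DenseStrings X → ∃ n, initSeg G n ∈ X

/-- A hyperimmune set: infinite and its increasing enumeration (principal function)
is not dominated by any computable function. -/
def Hyperimmune (R : Set ℕ) : Prop :=
  R.Infinite ∧ ∀ f : ℕ → ℕ, Computable f →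
    ∃ᶠ n in Filter.atTop, f n < Nat.nth (· ∈ R) n

/-- A (computable) Mathias condition `[a, A]`. -/
structure MathiasCond where
  a : Finset ℕ
  A : Set ℕ
  infinite : A.Infinite
  comp : ComputablePred (· ∈ A)
  lt : ∀ x ∈ a, ∀ y ∈ A, x < y

/-- `c'` extends `c` as a Mathias condition. -/
def MathiasCond.Extends (c' c : MathiasCond) : Prop :=
  c.a ⊆ c'.a ∧ (↑c'.a \ ↑c.a : Set ℕ) ⊆ c.A ∧ c'.A ⊆ c.A

/-- A dense family of Mathias conditions. -/
def MathiasDense (𝒳 : Set MathiasCond) : Prop := ∀ c, ∃ c' ∈ 𝒳, c'.Extends c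

/-- `R ∈ [a, A]`. -/
def MathiasCond.Mem (c : MathiasCond) (R : Set ℕ) : Prop :=
  ↑c.a ⊆ R ∧ R ⊆ ↑c.a ∪ c.A

/-- `R` meets the family `𝒳` of Mathias conditions. -/
def Meets (R : Set ℕ) (𝒳 : Set MathiasCond) : Prop := ∃ c ∈ 𝒳, c.Mem R

/-- The arithmetical sets of naturals: closure of the computable sets under
complementation and projection. -/
inductive Arithmetical : Set ℕ → Prop
  | of_computable {S : Set ℕ} : ComputablePred (· ∈ S) → Arithmetical S
  | compl {S : Set ℕ} : Arithmetical S → Arithmetical {n | n ∉ S}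
  | proj {S : Set ℕ} : Arithmetical S → Arithmetical {n | ∃ m, Nat.pair n m ∈ S}

open Classical in
/-- `n` codes the Mathias condition `c`: its first component is the canonical code of the
finite set and its second component is an index for the characteristic function of `A`. -/
noncomputable def CondCode (n : ℕ) (c : MathiasCond) : Prop :=
  n.unpair.1 = Encodable.encode c.a ∧
  ∀ x, ((Denumerable.ofNat Nat.Partrec.Code n.unpair.2)).eval x = Part.some (if x ∈ c.A then 1 else 0)

/-- The set of codes of members of `𝒳`. -/
def CodesOf (𝒳 : Set MathiasCond) : Set ℕ := {n | ∃ c ∈ 𝒳, CondCode n c}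

/-- A Mathias generic real: one meeting every arithmetically definable dense family
of Mathias conditions. -/
def MathiasGeneric (R : Set ℕ) : Prop :=
  ∀ 𝒳 : Set MathiasCond, Arithmetical (CodesOf 𝒳) → MathiasDense 𝒳 → Meets R 𝒳

/-- A Σ⁰₃ set of naturals. -/
def Sigma03Set (S : Set ℕ) : Prop :=
  ∃ p : ℕ → ℕ → ℕ → ℕ → Bool,
    (Computable fun x : ℕ × ℕ × ℕ × ℕ => p x.1 x.2.1 x.2.2.1 x.2.2.2) ∧
    S = {n | ∃ a, ∀ b, ∃ c, p n a b c = true}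

/-- A Mathias 3-generic real. -/
def Mathias3Generic (R : Set ℕ) : Prop :=
  ∀ 𝒳 : Set MathiasCond, Sigma03Set (CodesOf 𝒳) → MathiasDense 𝒳 → Meets R 𝒳

/-- An effectively immune set. -/
def EffectivelyImmune (Q : Set ℕ) : Prop :=
  Q.Infinite ∧ ∃ h : ℕ → ℕ, Computable h ∧
    ∀ e, WSet e ⊆ Q → (WSet e).Finite ∧ (WSet e).ncard ≤ h e

/-- The basic cylinder of 2^ω determined by the finite string `σ`. -/
def Cyl (σ : List Bool) : Set (ℕ → Bool) := {G | ∀ i : Fin σ.length, G i = σ.get i}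

/-- The open subset of 2^ω generated by a set of strings. -/
def OpenFrom (P : Set (List Bool)) : Set (ℕ → Bool) := ⋃ σ ∈ P, Cyl σ

/-- A uniformly c.e. sequence of sets of strings. -/
def UniformlyCE (P : ℕ → Set (List Bool)) : Prop :=
  ∃ f : ℕ → List Bool → ℕ → Bool,
    (Computable fun x : ℕ × List Bool × ℕ => f x.1 x.2.1 x.2.2) ∧
    ∀ n σ, σ ∈ P n ↔ ∃ s, f n σ s = true

/-- `μ` is the uniform (fair-coin) product measure on 2^ω: every basic cylinder
determined by a string of length `l` has measure `2⁻ˡ`. -/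
def IsFairCoin (μ : MeasureTheory.Measure (ℕ → Bool)) : Prop :=
  ∀ σ : List Bool, μ (Cyl σ) = (2 ^ σ.length : ENNReal)⁻¹

/-- A Schnorr test with respect to the measure `μ`: uniformly c.e. open sets with
uniformly computable measures bounded by `2^{-n}`. -/
def SchnorrTest (μ : MeasureTheory.Measure (ℕ → Bool)) (U : ℕ → Set (ℕ → Bool)) : Prop :=
  (∃ P : ℕ → Set (List Bool), UniformlyCE P ∧ ∀ n, U n = OpenFrom (P n)) ∧
  (∃ q : ℕ → ℕ → ℚ, Computable₂ q ∧
    ∀ n k, |(q n k : ℝ) - (μ (U n)).toReal| ≤ (2 : ℝ)⁻¹ ^ k) ∧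
  ∀ n, μ (U n) ≤ (2 ^ n : ENNReal)⁻¹

/-- A Schnorr random real (with respect to the fair-coin measure `μ`). -/
def SchnorrRandom (μ : MeasureTheory.Measure (ℕ → Bool)) (G : ℕ → Bool) : Prop :=
  ∀ U : ℕ → Set (ℕ → Bool), SchnorrTest μ U → G ∉ ⋂ n, U n

open Classical in
/-- The characteristic sequence of a set of naturals, as a point of 2^ω. -/
noncomputable def chiB (R : Set ℕ) : ℕ → Bool := fun n => decide (n ∈ R)

/-!
Fix a strictly increasing `g` with `g n` above `φₑ(n)` for every `e ≤ n`, where `φₑ` is the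
`e`-th partial computable function read as a total one; then `g` eventually dominates every
computable function, and `R = range g` is hyperimmune because `g` is its principal function.
A computable `D : ℕ → Finset ℕ` has a computable bound on `max (D i)` (its code), so eventually
every element of `D i` is below `g i`; if moreover `D i ⊆ R`, then `D i` is contained in
`{g 0, …, g (i - 1)}` and has at most `i` elements. Thus `R` is canonically immune with
modulus `id`.
-/

open Filter Encodable

namespace Denumerable

theorem le_add_encode_of_mem_raise' : ∀ {l : List ℕ} {n a : ℕ}, a ∈ raise' l n → a ≤ n + encode l
  | [], _, _, h => by simp [raise'] at h
  | m :: l, n, a, h => by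
    have hcode : encode (m :: l) = Nat.pair m (encode l) + 1 := by
      rw [encode_list_cons, encode_nat]
    have hpair := Nat.add_le_pair m (encode l)
    rcases List.mem_cons.mp h with rfl | h
    · omega
    · have := le_add_encode_of_mem_raise' h
      omega

theorem le_of_mem_ofNat_finset {n a : ℕ} (h : a ∈ ofNat (Finset ℕ) n) : a ≤ n := by
  have hofNat : ofNat (Finset ℕ) n =
      (raise'Finset (ofNat (List ℕ) n) 0).map (eqv ℕ).symm.toEmbedding :=
    ofNat_of_decode rfl
  rw [hofNat, Finset.mem_map] at h
  obtain ⟨b, hb, rfl⟩ := h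
  show b ≤ n
  simpa [encode_ofNat] using le_add_encode_of_mem_raise' (l := ofNat (List ℕ) n) (n := 0) hb

end Denumerable

/-- The `Primcodable` structure on `Finset ℕ` comes from `Denumerable.finset`, not from
`Finset.encodable`; for that coding a finite set's code bounds its elements. -/
theorem Computable.exists_bound_of_finset {D : ℕ → Finset ℕ} (hD : Computable D) :
    ∃ b : ℕ → ℕ, Computable b ∧ ∀ i, ∀ a ∈ D i, a ≤ b i := by
  refine ⟨fun i => @encode (Finset ℕ) Primcodable.toEncodable (D i),
    Computable.encode.comp hD, fun i a ha => Denumerable.le_of_mem_ofNat_finset ?_⟩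
  rwa [Denumerable.ofNat_encode]

open Classical in
noncomputable def totalEval (e n : ℕ) : ℕ :=
  if h : ((Denumerable.ofNat Nat.Partrec.Code e).eval n).Dom then
    ((Denumerable.ofNat Nat.Partrec.Code e).eval n).get h
  else 0

theorem Computable.exists_totalEval_eq {f : ℕ → ℕ} (hf : Computable f) :
    ∃ e, totalEval e = f := by
  obtain ⟨c, hc⟩ := Nat.Partrec.Code.exists_code.mp (Partrec.nat_iff.mp hf)
  exact ⟨encode c, funext fun n => by simp [totalEval, Denumerable.ofNat_encode, hc]⟩

theorem exists_strictMono_diagonal_gt (f : ℕ → ℕ → ℕ) :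
    ∃ g : ℕ → ℕ, StrictMono g ∧ ∀ e n, e ≤ n → f e n < g n := by
  set column : ℕ → ℕ := fun n => ∑ e ∈ Finset.range (n + 1), (f e n + 1)
  refine ⟨fun n => ∑ k ∈ Finset.range (n + 1), column k,
    strictMono_nat_of_lt_succ fun n => ?_, fun e n hen => ?_⟩
  · rw [Finset.sum_range_succ _ (n + 1)]
    have : 1 ≤ column (n + 1) := by
      simp only [column, Finset.sum_range_succ']
      omega
    omega
  · calc f e n < f e n + 1 := Nat.lt_succ_self _
      _ ≤ column n := Finset.single_le_sum (f := fun e => f e n + 1)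
            (fun _ _ => Nat.zero_le _) (Finset.mem_range.mpr (Nat.lt_succ_of_le hen))
      _ ≤ ∑ k ∈ Finset.range (n + 1), column k :=
            Finset.single_le_sum (fun _ _ => Nat.zero_le _) (Finset.self_mem_range_succ n)

def DominatesComputable (g : ℕ → ℕ) : Prop :=
  ∀ f : ℕ → ℕ, Computable f → ∀ᶠ n in atTop, f n < g n

theorem exists_strictMono_dominatesComputable :
    ∃ g : ℕ → ℕ, StrictMono g ∧ DominatesComputable g := by
  obtain ⟨g, hmono, hgt⟩ := exists_strictMono_diagonal_gt totalEval
  refine ⟨g, hmono, fun f hf => ?_⟩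
  obtain ⟨e, rfl⟩ := hf.exists_totalEval_eq
  exact eventually_atTop.mpr ⟨e, hgt e⟩

theorem StrictMono.card_le_of_subset_range {g : ℕ → ℕ} (hg : StrictMono g) {s : Finset ℕ}
    {i : ℕ} (hsR : ↑s ⊆ Set.range g) (hlt : ∀ a ∈ s, a < g i) : s.card ≤ i := by
  have hsub : s ⊆ (Finset.range i).image g := by
    intro a ha
    obtain ⟨k, rfl⟩ := hsR ha
    exact Finset.mem_image_of_mem g (Finset.mem_range.mpr (hg.lt_iff_lt.mp (hlt _ ha)))
  calc s.card ≤ ((Finset.range i).image g).card := Finset.card_le_card hsub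
    _ ≤ i := Finset.card_image_le.trans (Finset.card_range i).le

theorem StrictMono.nth_mem_range {g : ℕ → ℕ} (hg : StrictMono g) :
    Nat.nth (· ∈ Set.range g) = g := by
  have hinf : (Set.range g).Infinite := Set.infinite_range_of_injective hg.injective
  exact ((Nat.nth_strictMono hinf).range_inj hg).mp (Nat.range_nth_of_infinite hinf)

theorem canonImmuneMod_range_id {g : ℕ → ℕ} (hg : StrictMono g) (hdom : DominatesComputable g) :
    CanonImmuneMod (Set.range g) id := by
  refine ⟨Set.infinite_range_of_injective hg.injective, fun D ⟨hD, _⟩ => ?_⟩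
  obtain ⟨b, hb, hbD⟩ := hD.exists_bound_of_finset
  filter_upwards [hdom b hb] with i hbi hDR
  exact hg.card_le_of_subset_range hDR fun a ha => (hbD i a ha).trans_lt hbi

theorem hyperimmune_range {g : ℕ → ℕ} (hg : StrictMono g) (hdom : DominatesComputable g) :
    Hyperimmune (Set.range g) := by
  refine ⟨Set.infinite_range_of_injective hg.injective, fun f hf => ?_⟩
  rw [hg.nth_mem_range]
  exact (hdom f hf).frequently

/-- There is a canonically immune set which is also hyperimmune. -/
theorem exists_canonically_immune_hyperimmune :
    ∃ R : Set ℕ, CanonicallyImmune R ∧ Hyperimmune R := by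
  obtain ⟨g, hg, hdom⟩ := exists_strictMono_dominatesComputable
  exact ⟨Set.range g, ⟨id, Computable.id, canonImmuneMod_range_id hg hdom⟩,
    hyperimmune_range hg hdom⟩
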